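/- Let $(\Omega,\mathscr F,\mathbb P,(\mathscr F_j)_{j=0}^\infty)$ be a filtered probability space and $(\xi_j)_{j=1}^\infty$ an adapted sequence of real random variables such that $\xi_j$ is independent of $\mathscr F_{j-1}$, $\mathsf E\xi_j=0$ and $\mathsf E\xi_j^2=\sigma_j^2\in(0,\infty)$; set $s_n^2=\sum_{j=1}^n\sigma_j^2$. Let $(\lambda_j)_{j=0}^{n-1}$ be adapted with $0\le\lambda_j\le\Lambda$ a.s., put $t_j=s_j^2/s_n^2$ ($t_0=0$) and $X_j=\frac{1}{s_n}\sum_{k=0}^{j-1}\lambda_k\xi_{k+1}$. Let $g:[0,1]\times\mathbb R\to\mathbb R$ satisfy $|g(t_1,x_1)-g(t_2,x_2)|\le K(|t_1-t_2|^{1/2}+|x_1-x_2|)^{\alpha}$ for some $K>0$, $\alpha\in(0,1]$. Then for any random variables $\widehat t_j$ with $\widehat t_j\in[t_j,t_{j+1}]$ a.s., $\Big|\mathsf E\sum_{j=0}^{n-1}\frac{\sigma_{j+1}^2}{s_n^2}\big(g(\widehat t_j,X_{j+1})-g(t_j,X_j)\big)\Big|\le K(1+\Lambda^{\alpha})\Big(\max_{1\le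 j\le n}\frac{\sigma_j}{s_n}\Big)^{\alpha}.$ -/

import Mathlib

open MeasureTheory ProbabilityTheory Filter

/-! Each summand is bounded pathwise through the Hölder condition: over step `j` time moves by
`t (j+1) - t j = (σ (j+1) / s n)²` and space by `lam j * ξ (j+1) / s n`, so subadditivity of `x ↦ x ^ α`
bounds the increment of `g` by `K ((σ (j+1) / s n) ^ α + Λ ^ α |ξ (j+1) / s n| ^ α)`. Jensen's
inequality for the concave `x ↦ x ^ (α/2)` applied to `ξ (j+1)²` gives
`E |ξ (j+1) / s n| ^ α ≤ (σ (j+1) / s n) ^ α`, and the weights `σ (j+1)² / s n²` sum to one. -/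

section Moments

variable {Ω : Type*} {mΩ : MeasurableSpace Ω} {P : Measure Ω} {f : Ω → ℝ} {α : ℝ}

lemma abs_rpow_eq_sq_rpow_half (x α : ℝ) : |x| ^ α = (x ^ 2) ^ (α / 2) := by
  rw [← sq_abs, ← Real.rpow_natCast, ← Real.rpow_mul (abs_nonneg x)]
  norm_num [mul_div_cancel₀]

lemma integrable_abs_rpow_of_integrable_sq [IsFiniteMeasure P]
    (hf : Integrable (fun ω => f ω ^ 2) P) (hα0 : 0 ≤ α) (hα2 : α ≤ 2) :
    Integrable (fun ω => |f ω| ^ α) P := by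
  have hmem : MemLp (fun ω => f ω ^ 2) (ENNReal.ofReal (α / 2)) P :=
    (memLp_one_iff_integrable.mpr hf).mono_exponent (by
      rw [← ENNReal.ofReal_one]; exact ENNReal.ofReal_le_ofReal (by linarith))
  simpa [ENNReal.toReal_ofReal (by positivity : 0 ≤ α / 2), abs_rpow_eq_sq_rpow_half]
    using hmem.integrable_norm_rpow'

lemma integral_abs_rpow_le_of_integral_sq_le [IsProbabilityMeasure P] {c : ℝ}
    (hf : Integrable (fun ω => f ω ^ 2) P) (hc : 0 ≤ c) (hfc : ∫ ω, f ω ^ 2 ∂P ≤ c ^ 2)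
    (hα0 : 0 ≤ α) (hα2 : α ≤ 2) :
    ∫ ω, |f ω| ^ α ∂P ≤ c ^ α := by
  have hα' : 0 ≤ α / 2 := by positivity
  have hjensen := (Real.concaveOn_rpow hα' (by linarith)).le_map_integral
    ((Real.continuous_rpow_const hα').continuousOn) isClosed_Ici
    (ae_of_all _ fun ω => sq_nonneg (f ω)) hf
    (by simpa only [Function.comp_def, abs_rpow_eq_sq_rpow_half]
      using integrable_abs_rpow_of_integrable_sq hf hα0 hα2)
  calc ∫ ω, |f ω| ^ α ∂P = ∫ ω, (f ω ^ 2) ^ (α / 2) ∂P := by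
        simp only [abs_rpow_eq_sq_rpow_half]
    _ ≤ (∫ ω, f ω ^ 2 ∂P) ^ (α / 2) := hjensen
    _ ≤ (c ^ 2) ^ (α / 2) := Real.rpow_le_rpow (integral_nonneg fun ω => sq_nonneg _) hfc hα'
    _ = c ^ α := by rw [← abs_rpow_eq_sq_rpow_half, abs_of_nonneg hc]

lemma integral_const_add_mul_abs_rpow_le [IsProbabilityMeasure P] {c K Λ : ℝ}
    (hf : Integrable (fun ω => f ω ^ 2) P) (hc : 0 ≤ c) (hfc : ∫ ω, f ω ^ 2 ∂P ≤ c ^ 2)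
    (hK : 0 ≤ K) (hΛ : 0 ≤ Λ) (hα0 : 0 ≤ α) (hα2 : α ≤ 2) :
    ∫ ω, K * (c ^ α + Λ ^ α * |f ω| ^ α) ∂P ≤ K * (1 + Λ ^ α) * c ^ α := by
  have hint := integrable_abs_rpow_of_integrable_sq hf hα0 hα2
  rw [integral_const_mul, integral_add (integrable_const _) (hint.const_mul _), integral_const,
    integral_const_mul, probReal_univ, one_smul]
  calc K * (c ^ α + Λ ^ α * ∫ ω, |f ω| ^ α ∂P) ≤ K * (c ^ α + Λ ^ α * c ^ α) := by
        gcongr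
        exact integral_abs_rpow_le_of_integral_sq_le hf hc hfc hα0 hα2
    _ = K * (1 + Λ ^ α) * c ^ α := by ring

end Moments

def ParabolicHolderWith (K α : ℝ) (g : ℝ × ℝ → ℝ) : Prop :=
  ∀ t₁ ∈ Set.Icc (0:ℝ) 1, ∀ t₂ ∈ Set.Icc (0:ℝ) 1, ∀ x₁ x₂ : ℝ,
    |g (t₁, x₁) - g (t₂, x₂)| ≤ K * (Real.sqrt |t₁ - t₂| + |x₁ - x₂|) ^ α

lemma ParabolicHolderWith.abs_sub_le_of_step {K α : ℝ} {g : ℝ × ℝ → ℝ}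
    (hg : ParabolicHolderWith K α g) (hK : 0 ≤ K) (hα0 : 0 ≤ α) (hα1 : α ≤ 1)
    {a b b' δ x y l ζ Λ : ℝ} (hb : b ∈ Set.Icc (0:ℝ) 1) (hb' : b' ∈ Set.Icc (0:ℝ) 1)
    (ha : a ∈ Set.Icc b b') (hbb' : b' - b = δ ^ 2) (hδ : 0 ≤ δ) (hl : l ∈ Set.Icc 0 Λ)
    (hxy : x - y = l * ζ) :
    |g (a, x) - g (b, y)| ≤ K * (δ ^ α + Λ ^ α * |ζ| ^ α) := by
  have hΛ : 0 ≤ Λ := hl.1.trans hl.2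
  have ht : Real.sqrt |a - b| ≤ δ := by
    rw [Real.sqrt_le_iff, abs_of_nonneg (sub_nonneg.mpr ha.1)]
    exact ⟨hδ, by linarith [ha.2]⟩
  have hx : |x - y| ≤ Λ * |ζ| := by
    rw [hxy, abs_mul, abs_of_nonneg hl.1]
    gcongr
    exact hl.2
  calc |g (a, x) - g (b, y)| ≤ K * (Real.sqrt |a - b| + |x - y|) ^ α :=
        hg a ⟨hb.1.trans ha.1, ha.2.trans hb'.2⟩ b hb x y
    _ ≤ K * (δ + Λ * |ζ|) ^ α := by gcongr
    _ ≤ K * (δ ^ α + (Λ * |ζ|) ^ α) := by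
        gcongr
        exact Real.rpow_add_le_add_rpow hδ (by positivity) hα0 hα1
    _ = K * (δ ^ α + Λ ^ α * |ζ| ^ α) := by rw [Real.mul_rpow hΛ (abs_nonneg ζ)]

lemma sum_range_div_sum_range_mem_Icc {a : ℕ → ℝ} (ha : ∀ k, 0 ≤ a k) {j n : ℕ} (hjn : j ≤ n)
    (hpos : 0 < ∑ k ∈ Finset.range n, a k) :
    (∑ k ∈ Finset.range j, a k) / ∑ k ∈ Finset.range n, a k ∈ Set.Icc (0:ℝ) 1 := by
  rw [Set.mem_Icc, div_le_one hpos]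
  exact ⟨div_nonneg (Finset.sum_nonneg fun k _ => ha k) hpos.le,
    Finset.sum_le_sum_of_subset_of_nonneg (Finset.range_subset_range.mpr hjn) fun k _ _ => ha k⟩

lemma abs_integral_sum_mul_le {Ω ι : Type*} {mΩ : MeasurableSpace Ω} {μ : Measure Ω}
    (S : Finset ι) {w : ι → ℝ} {h B : ι → Ω → ℝ} {C : ℝ}
    (hw : ∀ i ∈ S, 0 ≤ w i) (hw1 : ∑ i ∈ S, w i = 1) (hB : ∀ i ∈ S, Integrable (B i) μ)
    (hhB : ∀ i ∈ S, ∀ᵐ ω ∂μ, |h i ω| ≤ B i ω) (hBC : ∀ i ∈ S, ∫ ω, B i ω ∂μ ≤ C) :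
    |∫ ω, ∑ i ∈ S, w i * h i ω ∂μ| ≤ C := by
  have hwB : Integrable (fun ω => ∑ i ∈ S, w i * B i ω) μ :=
    integrable_finsetSum S fun i hi => (hB i hi).const_mul (w i)
  have hbound : ∀ᵐ ω ∂μ, ‖∑ i ∈ S, w i * h i ω‖ ≤ ∑ i ∈ S, w i * B i ω := by
    filter_upwards [(eventually_all_finset S).mpr hhB] with ω hω
    refine (Finset.abs_sum_le_sum_abs _ _).trans (Finset.sum_le_sum fun i hi => ?_)
    rw [abs_mul, abs_of_nonneg (hw i hi)]
    exact mul_le_mul_of_nonneg_left (hω i hi) (hw i hi)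
  calc |∫ ω, ∑ i ∈ S, w i * h i ω ∂μ| ≤ ∫ ω, ∑ i ∈ S, w i * B i ω ∂μ :=
        norm_integral_le_of_norm_le hwB hbound
    _ = ∑ i ∈ S, w i * ∫ ω, B i ω ∂μ := by
        rw [integral_finsetSum S fun i hi => (hB i hi).const_mul (w i)]
        simp only [integral_const_mul]
    _ ≤ ∑ i ∈ S, w i * C :=
        Finset.sum_le_sum fun i hi => mul_le_mul_of_nonneg_left (hBC i hi) (hw i hi)
    _ = C := by rw [← Finset.sum_mul, hw1, one_mul]

theorem stmt_9 {Ω : Type*} {mΩ : MeasurableSpace Ω} (P : Measure Ω) [IsProbabilityMeasure P]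
    (ξ : ℕ → Ω → ℝ) (σ s : ℕ → ℝ)
    (hσ : ∀ j, 0 < σ j)
    (hint2 : ∀ j, 1 ≤ j → Integrable (fun ω => ξ j ω ^ 2) P)
    (hvar : ∀ j, 1 ≤ j → (∫ ω, ξ j ω ^ 2 ∂P) = σ j ^ 2)
    (hs : ∀ n, s n = Real.sqrt (∑ j ∈ Finset.range n, σ (j + 1) ^ 2))
    (n : ℕ) (hn : 1 ≤ n) (lam : ℕ → Ω → ℝ) (Λ : ℝ) (hΛ : 0 ≤ Λ)
    (hlam_bd : ∀ j, ∀ᵐ ω ∂P, lam j ω ∈ Set.Icc 0 Λ)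
    (t : ℕ → ℝ) (ht : ∀ j, t j = (∑ k ∈ Finset.range j, σ (k + 1) ^ 2) / s n ^ 2)
    (X : ℕ → Ω → ℝ)
    (hX : ∀ j ω, X j ω = (1 / s n) * ∑ k ∈ Finset.range j, lam k ω * ξ (k + 1) ω)
    (g : ℝ × ℝ → ℝ) (K α : ℝ) (hK : 0 < K) (hα : 0 < α) (hα1 : α ≤ 1)
    (hg : ∀ t₁ ∈ Set.Icc (0:ℝ) 1, ∀ t₂ ∈ Set.Icc (0:ℝ) 1, ∀ x₁ x₂ : ℝ,
      |g (t₁, x₁) - g (t₂, x₂)| ≤ K * (Real.sqrt |t₁ - t₂| + |x₁ - x₂|) ^ α)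
    (that : ℕ → Ω → ℝ)
    (hthat : ∀ j, ∀ᵐ ω ∂P, that j ω ∈ Set.Icc (t j) (t (j + 1))) :
    |∫ ω, ∑ j ∈ Finset.range n,
        σ (j + 1) ^ 2 / s n ^ 2 * (g (that j ω, X (j + 1) ω) - g (t j, X j ω)) ∂P|
      ≤ K * (1 + Λ ^ α) *
        ((Finset.Icc 1 n).sup' (Finset.nonempty_Icc.mpr hn) (fun j => σ j / s n)) ^ α := by
  have hsum_pos : 0 < ∑ j ∈ Finset.range n, σ (j + 1) ^ 2 :=
    Finset.sum_pos (fun j _ => pow_pos (hσ _) 2) ⟨0, Finset.mem_range.mpr hn⟩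
  have hsn : 0 < s n := hs n ▸ Real.sqrt_pos.mpr hsum_pos
  have hsn2 : s n ^ 2 = ∑ j ∈ Finset.range n, σ (j + 1) ^ 2 := by
    rw [hs, Real.sq_sqrt hsum_pos.le]
  have hratio : ∀ j, 0 ≤ σ j / s n := fun j => div_nonneg (hσ j).le hsn.le
  have ht01 : ∀ j ≤ n, t j ∈ Set.Icc (0:ℝ) 1 := fun j hj => by
    rw [ht, hsn2]
    exact sum_range_div_sum_range_mem_Icc (fun k => sq_nonneg _) hj hsum_pos
  have htstep : ∀ j, t (j + 1) - t j = (σ (j + 1) / s n) ^ 2 := fun j => by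
    rw [ht, ht, Finset.sum_range_succ, div_pow]; ring
  have hXstep : ∀ j ω, X (j + 1) ω - X j ω = lam j ω * (ξ (j + 1) ω / s n) := fun j ω => by
    rw [hX, hX, Finset.sum_range_succ]; ring
  have hξ_int : ∀ j, Integrable (fun ω => (ξ (j + 1) ω / s n) ^ 2) P := fun j => by
    simpa only [div_pow] using (hint2 (j + 1) (by omega)).div_const (s n ^ 2)
  have hξ_var : ∀ j, ∫ ω, (ξ (j + 1) ω / s n) ^ 2 ∂P = (σ (j + 1) / s n) ^ 2 := fun j => by
    simp only [div_pow]; rw [integral_div, hvar (j + 1) (by omega)]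
  refine abs_integral_sum_mul_le (Finset.range n)
    (B := fun j ω => K * ((σ (j + 1) / s n) ^ α + Λ ^ α * |ξ (j + 1) ω / s n| ^ α))
    (fun j _ => by positivity) (by rw [← Finset.sum_div, hsn2, div_self hsum_pos.ne'])
    (fun j _ => ((integrable_const _).add ((integrable_abs_rpow_of_integrable_sq (hξ_int j)
      hα.le (by linarith)).const_mul _)).const_mul K)
    (fun j hj => ?_) (fun j hj => ?_)
  · have hj' : j < n := Finset.mem_range.mp hj
    filter_upwards [hthat j, hlam_bd j] with ω hω hlam
    exact ParabolicHolderWith.abs_sub_le_of_step hg hK.le hα.le hα1 (ht01 j hj'.le)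
      (ht01 (j + 1) hj') hω (htstep j) (hratio _) hlam (hXstep j ω)
  · refine (integral_const_add_mul_abs_rpow_le (hξ_int j) (hratio _)
      (hξ_var j).le hK.le hΛ hα.le (by linarith)).trans ?_
    gcongr
    · exact hratio _
    exact Finset.le_sup' (fun j => σ j / s n)
      (Finset.mem_Icc.mpr ⟨Nat.le_add_left 1 j, Finset.mem_range.mp hj⟩)
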